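/- arXiv:2409.19722 — 4 statements merged into one kernel-verified Lean document; each statement's English description precedes it below -/
import Mathlib

section
/- If a vanilla λ-term t is cut-free, then its translation to the natural λ-calculus with explicit substitutions is a normal form for the value substitution calculus (VSC) reduction. -/
/-- Vanilla λ-terms: var, abstraction, cut [s/x]t, subtraction [y s/x]t. -/
inductive VTerm : Type
  | var : ℕ → VTerm
  | lam : ℕ → VTerm → VTerm
  | cut : VTerm → ℕ → VTerm → VTerm
  | sub : ℕ → VTerm → ℕ → VTerm → VTerm
  deriving DecidableEq

namespace VTerm

/-- Values: variables and abstractions. -/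
inductive IsValue : VTerm → Prop
  | var (x : ℕ) : IsValue (var x)
  | lam (x : ℕ) (t : VTerm) : IsValue (lam x t)

/-- Free variables of a vanilla term. -/
def fv : VTerm → Finset ℕ
  | var x => {x}
  | lam x t => fv t \ {x}
  | cut s x t => fv s ∪ (fv t \ {x})
  | sub y s x t => insert y (fv s ∪ (fv t \ {x}))

/-- Meta-level substitution of a value `v` for `x` in a vanilla term. -/
def vsub (v : VTerm) (x : ℕ) : VTerm → VTerm
  | var y => if y = x then v else var y
  | lam y t => lam y (vsub v x t)
  | cut s y t => cut (vsub v x s) y (vsub v x t)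
  | sub z s y t =>
      if z = x then
        match v with
        | var w => sub w (vsub v x s) y (vsub v x t)
        | lam w u => cut (cut (vsub v x s) w u) y (vsub v x t)
        | cut _ _ _ => sub z (vsub v x s) y (vsub v x t)
        | sub _ _ _ _ => sub z (vsub v x s) y (vsub v x t)
      else sub z (vsub v x s) y (vsub v x t)

/-- Cut-free vanilla terms. -/
def CutFree : VTerm → Prop
  | var _ => True
  | lam _ t => CutFree t
  | cut _ _ _ => False
  | sub _ s _ t => CutFree s ∧ CutFree t

end VTerm

/-- Left contexts: L ::= ⟨·⟩ | [t/x]L | [y t/x]L. -/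
inductive LCtx : Type
  | hole : LCtx
  | cut : VTerm → ℕ → LCtx → LCtx
  | sub : ℕ → VTerm → ℕ → LCtx → LCtx
  deriving DecidableEq

namespace LCtx

def plug : LCtx → VTerm → VTerm
  | hole, t => t
  | cut s x L, t => VTerm.cut s x (L.plug t)
  | sub y s x L, t => VTerm.sub y s x (L.plug t)

/-- Variables captured by a left context. -/
def dom : LCtx → Finset ℕ
  | hole => ∅
  | cut _ x L => insert x L.dom
  | sub _ _ x L => insert x L.dom

end LCtx

/-- General contexts for vanilla terms. -/
inductive GCtx : Type
  | hole : GCtx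
  | lam : ℕ → GCtx → GCtx
  | cutL : GCtx → ℕ → VTerm → GCtx
  | cutR : VTerm → ℕ → GCtx → GCtx
  | subL : ℕ → GCtx → ℕ → VTerm → GCtx
  | subR : ℕ → VTerm → ℕ → GCtx → GCtx

namespace GCtx

def plug : GCtx → VTerm → VTerm
  | hole, t => t
  | lam x C, t => VTerm.lam x (C.plug t)
  | cutL C x s, t => VTerm.cut (C.plug t) x s
  | cutR s x C, t => VTerm.cut s x (C.plug t)
  | subL y C x s, t => VTerm.sub y (C.plug t) x s
  | subR y s x C, t => VTerm.sub y s x (C.plug t)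

end GCtx

/-- Root cut-elimination rule: [L⟨v⟩/x]t → L⟨{v/x}t⟩. -/
inductive CutRoot : VTerm → VTerm → Prop
  | mk (L : LCtx) (v : VTerm) (x : ℕ) (t : VTerm) (hv : v.IsValue) :
      CutRoot (VTerm.cut (L.plug v) x t) (L.plug (VTerm.vsub v x t))

/-- Cut elimination: closure of the root rule under general contexts. -/
inductive CutStep : VTerm → VTerm → Prop
  | mk (C : GCtx) {t s : VTerm} : CutRoot t s → CutStep (C.plug t) (C.plug s)

/-- Renaming root step: the value is a variable. -/
inductive RenRoot : VTerm → VTerm → Prop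
  | mk (L : LCtx) (y x : ℕ) (t : VTerm) :
      RenRoot (VTerm.cut (L.plug (VTerm.var y)) x t) (L.plug (VTerm.vsub (VTerm.var y) x t))

/-- Renaming cut-elimination steps. -/
inductive RenStep : VTerm → VTerm → Prop
  | mk (C : GCtx) {t s : VTerm} : RenRoot t s → RenStep (C.plug t) (C.plug s)

/-- Strong normalization for cut elimination. -/
def SN (t : VTerm) : Prop := Acc (fun a b => CutStep b a) t

/-- Splitting of a vanilla term as a left context around a value. -/
def split : VTerm → LCtx × VTerm
  | VTerm.cut s x t => let p := split t; (LCtx.cut s x p.1, p.2)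
  | VTerm.sub y s x t => let p := split t; (LCtx.sub y s x p.1, p.2)
  | t => (LCtx.hole, t)

/-- General substitution {s/x}t := L⟨{v/x}t⟩ for s = L⟨v⟩. -/
def gsub (s : VTerm) (x : ℕ) (t : VTerm) : VTerm :=
  (split s).1.plug (VTerm.vsub (split s).2 x t)

/-- Formulas of minimal intuitionistic logic. -/
inductive Ty : Type
  | base : Ty
  | arr : Ty → Ty → Ty
  deriving DecidableEq

/-- Typing judgement of the vanilla sequent calculus (additive). -/
inductive Jud : (ℕ → Option Ty) → VTerm → Ty → Prop
  | ax (Γ : ℕ → Option Ty) (x : ℕ) (A : Ty) :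
      Γ x = some A → Jud Γ (VTerm.var x) A
  | cut (Γ : ℕ → Option Ty) (s : VTerm) (x : ℕ) (t : VTerm) (A B : Ty) :
      Γ x = none → Jud Γ s A →
      Jud (Function.update Γ x (some A)) t B → Jud Γ (VTerm.cut s x t) B
  | lamr (Γ : ℕ → Option Ty) (x : ℕ) (t : VTerm) (A B : Ty) :
      Γ x = none → Jud (Function.update Γ x (some A)) t B →
      Jud Γ (VTerm.lam x t) (Ty.arr A B)
  | subl (Γ : ℕ → Option Ty) (y : ℕ) (s : VTerm) (x : ℕ) (t : VTerm) (A B C : Ty) :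
      Γ x = none → (Γ y = none ∨ Γ y = some (Ty.arr A B)) →
      Jud Γ s A → Jud (Function.update Γ x (some B)) t C →
      Jud (Function.update Γ y (some (Ty.arr A B))) (VTerm.sub y s x t) C

/-- Natural λ-terms with explicit substitutions. -/
inductive NTerm : Type
  | var : ℕ → NTerm
  | lam : ℕ → NTerm → NTerm
  | app : NTerm → NTerm → NTerm
  | es : NTerm → ℕ → NTerm → NTerm
  deriving DecidableEq

namespace NTerm

inductive IsValue : NTerm → Prop
  | var (x : ℕ) : IsValue (var x)
  | lam (x : ℕ) (t : NTerm) : IsValue (lam x t)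

def fv : NTerm → Finset ℕ
  | var x => {x}
  | lam x t => fv t \ {x}
  | app t s => fv t ∪ fv s
  | es s x t => fv s ∪ (fv t \ {x})

/-- Meta-level substitution in natural terms. -/
def nsub (v : NTerm) (x : ℕ) : NTerm → NTerm
  | var y => if y = x then v else var y
  | lam y t => lam y (nsub v x t)
  | app t s => app (nsub v x t) (nsub v x s)
  | es s y t => es (nsub v x s) y (nsub v x t)

/-- Size: number of constructors. -/
def size : NTerm → ℕ
  | var _ => 1
  | lam _ t => size t + 1
  | app t s => size t + size s + 1
  | es s _ t => size s + size t + 1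

end NTerm

/-- List-of-substitutions contexts in the natural calculus. -/
inductive NLCtx : Type
  | hole : NLCtx
  | es : NTerm → ℕ → NLCtx → NLCtx

def NLCtx.plug : NLCtx → NTerm → NTerm
  | NLCtx.hole, t => t
  | NLCtx.es s x L, t => NTerm.es s x (L.plug t)

/-- General contexts for natural terms. -/
inductive NGCtx : Type
  | hole : NGCtx
  | lam : ℕ → NGCtx → NGCtx
  | appL : NGCtx → NTerm → NGCtx
  | appR : NTerm → NGCtx → NGCtx
  | esL : NGCtx → ℕ → NTerm → NGCtx
  | esR : NTerm → ℕ → NGCtx → NGCtx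

def NGCtx.plug : NGCtx → NTerm → NTerm
  | NGCtx.hole, t => t
  | NGCtx.lam x C, t => NTerm.lam x (C.plug t)
  | NGCtx.appL C s, t => NTerm.app (C.plug t) s
  | NGCtx.appR s C, t => NTerm.app s (C.plug t)
  | NGCtx.esL C x s, t => NTerm.es (C.plug t) x s
  | NGCtx.esR s x C, t => NTerm.es s x (C.plug t)

/-- Root dB rule: L⟨λx.t⟩ s → L⟨[s/x]t⟩. -/
inductive DBRoot : NTerm → NTerm → Prop
  | mk (L : NLCtx) (x : ℕ) (t s : NTerm) :
      DBRoot (NTerm.app (L.plug (NTerm.lam x t)) s) (L.plug (NTerm.es s x t))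

/-- Root vs rule: [L⟨v⟩/x]t → L⟨t{v/x}⟩. -/
inductive VsRoot : NTerm → NTerm → Prop
  | mk (L : NLCtx) (v : NTerm) (x : ℕ) (t : NTerm) (hv : v.IsValue) :
      VsRoot (NTerm.es (L.plug v) x t) (L.plug (NTerm.nsub v x t))

inductive DB : NTerm → NTerm → Prop
  | mk (C : NGCtx) {t s : NTerm} : DBRoot t s → DB (C.plug t) (C.plug s)

inductive Vs : NTerm → NTerm → Prop
  | mk (C : NGCtx) {t s : NTerm} : VsRoot t s → Vs (C.plug t) (C.plug s)

/-- VSC reduction: dB ∪ vs. -/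
def VSC (t s : NTerm) : Prop := DB t s ∨ Vs t s

/-- Translation from vanilla terms to natural terms. -/
def VTerm.toN : VTerm → NTerm
  | VTerm.var x => NTerm.var x
  | VTerm.lam x t => NTerm.lam x t.toN
  | VTerm.cut s x t => NTerm.es s.toN x t.toN
  | VTerm.sub y s x t => NTerm.es (NTerm.app (NTerm.var y) s.toN) x t.toN

/-- Translation of left contexts. -/
def LCtx.toN : LCtx → NLCtx
  | LCtx.hole => NLCtx.hole
  | LCtx.cut s x L => NLCtx.es s.toN x L.toN
  | LCtx.sub y s x L => NLCtx.es (NTerm.app (NTerm.var y) s.toN) x L.toN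

/-- Translation from natural terms to vanilla terms (with fresh choices). -/
def NTerm.toS : NTerm → VTerm
  | NTerm.var x => VTerm.var x
  | NTerm.lam x t => VTerm.lam x t.toS
  | NTerm.es s x t => VTerm.cut s.toS x t.toS
  | NTerm.app t s =>
      let a := t.toS
      let b := s.toS
      let x := (a.fv ∪ b.fv).sup id + 1
      VTerm.cut a x (VTerm.sub x b (x + 1) (VTerm.var (x + 1)))

/-- Weak contexts. -/
inductive WCtx : Type
  | hole : WCtx
  | cutR : VTerm → ℕ → WCtx → WCtx
  | cutL : WCtx → ℕ → VTerm → WCtx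
  | subR : ℕ → VTerm → ℕ → WCtx → WCtx
  | subL : ℕ → WCtx → ℕ → VTerm → WCtx

namespace WCtx

def plug : WCtx → VTerm → VTerm
  | hole, t => t
  | cutR s x W, t => VTerm.cut s x (W.plug t)
  | cutL W x s, t => VTerm.cut (W.plug t) x s
  | subR y s x W, t => VTerm.sub y s x (W.plug t)
  | subL y W x s, t => VTerm.sub y (W.plug t) x s

/-- Free variables of a weak context (ignoring the hole). -/
def fv : WCtx → Finset ℕ
  | hole => ∅
  | cutR s x W => s.fv ∪ (W.fv \ {x})
  | cutL W x s => W.fv ∪ (s.fv \ {x})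
  | subR y s x W => insert y (s.fv ∪ (W.fv \ {x}))
  | subL y W x s => insert y (W.fv ∪ (s.fv \ {x}))

/-- Variables captured by a weak context along the hole path. -/
def dom : WCtx → Finset ℕ
  | hole => ∅
  | cutR _ x W => insert x W.dom
  | cutL W _ _ => W.dom
  | subR _ _ x W => insert x W.dom
  | subL _ W _ _ => W.dom

end WCtx

/-- Structural equivalence: congruence closure of moving left rules past weak contexts. -/
inductive SEq : VTerm → VTerm → Prop
  | root1 (s : VTerm) (x : ℕ) (W : WCtx) (t : VTerm)
      (h1 : x ∉ W.fv) (h2 : Disjoint s.fv W.dom) :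
      SEq (VTerm.cut s x (W.plug t)) (W.plug (VTerm.cut s x t))
  | root2 (y : ℕ) (s : VTerm) (x : ℕ) (W : WCtx) (t : VTerm)
      (h1 : x ∉ W.fv) (h2 : Disjoint (insert y s.fv) W.dom) :
      SEq (VTerm.sub y s x (W.plug t)) (W.plug (VTerm.sub y s x t))
  | refl (t : VTerm) : SEq t t
  | symm {t s : VTerm} : SEq t s → SEq s t
  | trans {t s u : VTerm} : SEq t s → SEq s u → SEq t u
  | ctx (C : GCtx) {t s : VTerm} : SEq t s → SEq (C.plug t) (C.plug s)

/-- Iterated relation: exactly `n` steps. -/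
def RelPow {α : Type _} (r : α → α → Prop) : ℕ → α → α → Prop
  | 0, a, b => a = b
  | n + 1, a, c => ∃ b, r a b ∧ RelPow r n b c

/-- Elimination contexts E = L⟨[⟨·⟩/x]t⟩. -/
structure ECtx where
  L : LCtx
  x : ℕ
  t : VTerm

/-- Plugging a term in an elimination context. -/
def ECtx.plug (E : ECtx) (u : VTerm) : VTerm := E.L.plug (VTerm.cut u E.x E.t)

/-- Dual of a set of terms: elimination contexts producing SN terms. -/
def dualT (S : Set VTerm) : Set ECtx := {E | ∀ t ∈ S, SN (E.plug t)}

/-- Dual of a set of elimination contexts. -/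
def dualE (T : Set ECtx) : Set VTerm := {t | ∀ E ∈ T, SN (E.plug t)}

/-- Image of cut-free terms (closed under relevant subterms). -/
inductive Good : NTerm → Prop
  | var (x : ℕ) : Good (NTerm.var x)
  | lam (x : ℕ) {t : NTerm} : Good t → Good (NTerm.lam x t)
  | app (y : ℕ) {s : NTerm} : Good s → Good (NTerm.app (NTerm.var y) s)
  | es (y : ℕ) {s : NTerm} (x : ℕ) {t : NTerm} :
      Good s → Good t → Good (NTerm.es (NTerm.app (NTerm.var y) s) x t)

lemma good_toN (t : VTerm) (h : t.CutFree) : Good t.toN := by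
  induction t with
  | var x => exact Good.var x
  | lam x t ih => exact Good.lam x (ih h)
  | cut s x t ihs iht => exact absurd h (by simp [VTerm.CutFree])
  | sub y s x t ihs iht => exact Good.es y x (ihs h.1) (iht h.2)

lemma good_app_inv {a b : NTerm} (h : Good (NTerm.app a b)) :
    (∃ y, a = NTerm.var y) ∧ Good b := by
  cases h with | app y hb => exact ⟨⟨y, rfl⟩, hb⟩

lemma good_es_inv {a : NTerm} {x : ℕ} {b : NTerm} (h : Good (NTerm.es a x b)) :
    (∃ y s, a = NTerm.app (NTerm.var y) s ∧ Good s) ∧ Good b := by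
  cases h with | es y x' hs ht => exact ⟨⟨y, _, rfl, hs⟩, ht⟩

lemma good_plug {C : NGCtx} {r : NTerm} (h : Good (C.plug r)) : Good r := by
  induction C generalizing r with
  | hole => exact h
  | lam x C ih => cases h with | lam _ h => exact ih h
  | appL C s ih =>
    obtain ⟨⟨y, hy⟩, _⟩ := good_app_inv h
    exact ih (hy ▸ Good.var y)
  | appR s C ih => exact ih (good_app_inv h).2
  | esL C x s ih =>
    obtain ⟨⟨y, u, hy, hu⟩, _⟩ := good_es_inv h
    exact ih (hy ▸ Good.app y hu)
  | esR s x C ih => exact ih (good_es_inv h).2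

lemma good_no_db {u s : NTerm} (hg : Good u) (h : DBRoot u s) : False := by
  cases h with
  | mk L x t s =>
    obtain ⟨⟨y, hy⟩, -⟩ := good_app_inv hg
    cases L <;> simp [NLCtx.plug] at hy

lemma good_no_vs {u s : NTerm} (hg : Good u) (h : VsRoot u s) : False := by
  cases h with
  | mk L v x t hv =>
    obtain ⟨⟨y, w, hy, -⟩, -⟩ := good_es_inv hg
    cases L with
    | hole => cases hv <;> simp [NLCtx.plug] at hy
    | es => simp [NLCtx.plug] at hy

lemma good_no_DB {u s : NTerm} (hg : Good u) (h : DB u s) : False := by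
  cases h with | mk C hr => exact good_no_db (good_plug hg) hr

lemma good_no_Vs {u s : NTerm} (hg : Good u) (h : Vs u s) : False := by
  cases h with | mk C hr => exact good_no_vs (good_plug hg) hr

/-- cut-free vanilla terms translate to VSC-normal natural terms. -/
theorem cutFree_toN_VSC_normal (t : VTerm) (h : t.CutFree) :
    ¬ ∃ s : NTerm, VSC t.toN s := by
  rintro ⟨s, hs | hs⟩
  · exact good_no_DB (good_toN t h) hs
  · exact good_no_Vs (good_toN t h) hs
end

section
/- Substitution and the sequent-to-natural translation commute up to dB-reduction: for any vanilla value v, variable x, and vanilla term t, the natural term vᴺ{substituted for x in} tᴺ reduces by zero or more dB steps to ({v/x}t)ᴺ. -/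
def NGCtx.comp : NGCtx → NGCtx → NGCtx
  | NGCtx.hole, D => D
  | NGCtx.lam x C, D => NGCtx.lam x (C.comp D)
  | NGCtx.appL C s, D => NGCtx.appL (C.comp D) s
  | NGCtx.appR s C, D => NGCtx.appR s (C.comp D)
  | NGCtx.esL C x s, D => NGCtx.esL (C.comp D) x s
  | NGCtx.esR s x C, D => NGCtx.esR s x (C.comp D)

lemma NGCtx.plug_comp (C D : NGCtx) (t : NTerm) :
    (C.comp D).plug t = C.plug (D.plug t) := by
  induction C <;> simp [NGCtx.comp, NGCtx.plug, *]

local infix:50 " ⤳* " => Relation.ReflTransGen DB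

namespace DB

lemma plug (C : NGCtx) {a b : NTerm} (h : DB a b) : DB (C.plug a) (C.plug b) := by
  obtain ⟨D, h⟩ := h
  simpa only [NGCtx.plug_comp] using DB.mk (C.comp D) h

lemma beta (x : ℕ) (t s : NTerm) : DB (.app (.lam x t) s) (.es s x t) :=
  DB.mk .hole (DBRoot.mk .hole x t s)

lemma star_plug (C : NGCtx) {a b : NTerm} (h : a ⤳* b) : C.plug a ⤳* C.plug b :=
  h.lift C.plug fun _ _ => DB.plug C

lemma star_lam (x : ℕ) {t t' : NTerm} (h : t ⤳* t') : .lam x t ⤳* .lam x t' :=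
  star_plug (.lam x .hole) h

lemma star_app {t t' s s' : NTerm} (ht : t ⤳* t') (hs : s ⤳* s') :
    .app t s ⤳* .app t' s' :=
  (star_plug (.appL .hole s) ht).trans (star_plug (.appR t' .hole) hs)

lemma star_es {s s' t t' : NTerm} (x : ℕ) (hs : s ⤳* s') (ht : t ⤳* t') :
    .es s x t ⤳* .es s' x t' :=
  (star_plug (.esL .hole x t) hs).trans (star_plug (.esR s' x .hole) ht)

end DB

/-- substitution and the sequent-to-natural translation commute up to dB. -/
theorem toN_vsub_commute_up_to_dB (v : VTerm) (x : ℕ) (t : VTerm) (hv : v.IsValue) :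
    Relation.ReflTransGen DB (NTerm.nsub v.toN x t.toN) (VTerm.vsub v x t).toN := by
  induction t with
  | var y =>
    by_cases h : y = x <;> simp [VTerm.toN, NTerm.nsub, VTerm.vsub, h, Relation.ReflTransGen.refl]
  | lam y t ih => exact DB.star_lam y ih
  | cut s y t ihs iht => exact DB.star_es y ihs iht
  | sub z s y t ihs iht =>
    have hcongr := DB.star_es y (DB.star_app (.refl (a := NTerm.nsub v.toN x (.var z))) ihs) iht
    by_cases h : z = x
    · subst h
      cases hv with
      | var w => simpa [VTerm.toN, NTerm.nsub, VTerm.vsub] using hcongr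
      | lam w u =>
        -- {λw.u/z}[z s/y]t = [[s/w]u/y]t, whose translation is the dB-reduct of (λw.u) s
        simp only [VTerm.toN, NTerm.nsub, VTerm.vsub, if_true] at hcongr ⊢
        exact hcongr.tail (DB.plug (.esL .hole y _) (DB.beta w _ _))
    · simpa [VTerm.toN, NTerm.nsub, VTerm.vsub, h] using hcongr
end

section
/- The VSC simulates the vanilla λ-calculus: if a vanilla term t reduces to s by one cut-elimination step, then tᴺ reduces to sᴺ by one vs step followed by zero or more dB steps in the value substitution calculus. -/
namespace Sim

/-- Composition of natural general contexts. -/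
def NGCtx.comp : NGCtx → NGCtx → NGCtx
  | NGCtx.hole, D => D
  | NGCtx.lam x C, D => NGCtx.lam x (NGCtx.comp C D)
  | NGCtx.appL C s, D => NGCtx.appL (NGCtx.comp C D) s
  | NGCtx.appR s C, D => NGCtx.appR s (NGCtx.comp C D)
  | NGCtx.esL C x s, D => NGCtx.esL (NGCtx.comp C D) x s
  | NGCtx.esR s x C, D => NGCtx.esR s x (NGCtx.comp C D)

lemma plug_comp (C D : NGCtx) (t : NTerm) :
    (NGCtx.comp C D).plug t = C.plug (D.plug t) := by
  induction C with
  | hole => rfl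
  | lam x C ih => simp [NGCtx.comp, NGCtx.plug, ih]
  | appL C s ih => simp [NGCtx.comp, NGCtx.plug, ih]
  | appR s C ih => simp [NGCtx.comp, NGCtx.plug, ih]
  | esL C x s ih => simp [NGCtx.comp, NGCtx.plug, ih]
  | esR s x C ih => simp [NGCtx.comp, NGCtx.plug, ih]

lemma DB.ctx (C : NGCtx) {a b : NTerm} (h : DB a b) : DB (C.plug a) (C.plug b) := by
  cases h with
  | mk D r =>
    rw [← plug_comp, ← plug_comp]
    exact DB.mk (NGCtx.comp C D) r

lemma Vs.ctx (C : NGCtx) {a b : NTerm} (h : Vs a b) : Vs (C.plug a) (C.plug b) := by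
  cases h with
  | mk D r =>
    rw [← plug_comp, ← plug_comp]
    exact Vs.mk (NGCtx.comp C D) r

lemma dbstar_ctx (C : NGCtx) {a b : NTerm} (h : Relation.ReflTransGen DB a b) :
    Relation.ReflTransGen DB (C.plug a) (C.plug b) := by
  induction h with
  | refl => exact Relation.ReflTransGen.refl
  | tail _ h2 ih => exact ih.tail (DB.ctx C h2)

/-- dB* congruence for es on both sides. -/
lemma dbstar_es {a a' b b' : NTerm} (x : ℕ)
    (ha : Relation.ReflTransGen DB a a') (hb : Relation.ReflTransGen DB b b') :
    Relation.ReflTransGen DB (NTerm.es a x b) (NTerm.es a' x b') := by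
  have h1 := dbstar_ctx (NGCtx.esL NGCtx.hole x b) ha
  have h2 := dbstar_ctx (NGCtx.esR a' x NGCtx.hole) hb
  simp [NGCtx.plug] at h1 h2
  exact h1.trans h2

/-- Translation commutes with left-context plugging. -/
lemma toN_lplug (L : LCtx) (u : VTerm) :
    (L.plug u).toN = L.toN.plug u.toN := by
  induction L with
  | hole => rfl
  | cut s x L ih => simp [LCtx.plug, LCtx.toN, NLCtx.plug, VTerm.toN, ih]
  | sub y s x L ih => simp [LCtx.plug, LCtx.toN, NLCtx.plug, VTerm.toN, ih]

/-- NLCtx embedding into NGCtx. -/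
def NLCtx.toG : NLCtx → NGCtx
  | NLCtx.hole => NGCtx.hole
  | NLCtx.es s x L => NGCtx.esR s x (NLCtx.toG L)

lemma toG_plug (L : NLCtx) (t : NTerm) : (NLCtx.toG L).plug t = L.plug t := by
  induction L with
  | hole => rfl
  | es s x L ih => simp [NLCtx.toG, NGCtx.plug, NLCtx.plug, ih]

/-- Translation of vanilla general contexts. -/
def GCtx.toNG : GCtx → NGCtx
  | GCtx.hole => NGCtx.hole
  | GCtx.lam x C => NGCtx.lam x (GCtx.toNG C)
  | GCtx.cutL C x s => NGCtx.esL (GCtx.toNG C) x s.toN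
  | GCtx.cutR s x C => NGCtx.esR s.toN x (GCtx.toNG C)
  | GCtx.subL y C x s => NGCtx.esL (NGCtx.appR (NTerm.var y) (GCtx.toNG C)) x s.toN
  | GCtx.subR y s x C => NGCtx.esR (NTerm.app (NTerm.var y) s.toN) x (GCtx.toNG C)

lemma toN_gplug (C : GCtx) (t : VTerm) :
    (C.plug t).toN = (GCtx.toNG C).plug t.toN := by
  induction C with
  | hole => rfl
  | lam x C ih => simp [GCtx.plug, GCtx.toNG, NGCtx.plug, VTerm.toN, ih]
  | cutL C x s ih => simp [GCtx.plug, GCtx.toNG, NGCtx.plug, VTerm.toN, ih]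
  | cutR s x C ih => simp [GCtx.plug, GCtx.toNG, NGCtx.plug, VTerm.toN, ih]
  | subL y C x s ih => simp [GCtx.plug, GCtx.toNG, NGCtx.plug, VTerm.toN, ih]
  | subR y s x C ih => simp [GCtx.plug, GCtx.toNG, NGCtx.plug, VTerm.toN, ih]

lemma toN_value {v : VTerm} (hv : v.IsValue) : v.toN.IsValue := by
  cases hv with
  | var x => exact NTerm.IsValue.var x
  | lam x t => exact NTerm.IsValue.lam x t.toN

/-- Key lemma: nsub of translated value reduces by dB* to translation of vsub. -/
lemma key (v : VTerm) (hv : v.IsValue) (x : ℕ) : ∀ t : VTerm,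
    Relation.ReflTransGen DB (NTerm.nsub v.toN x t.toN) ((VTerm.vsub v x t).toN) := by
  intro t
  induction t with
  | var y =>
    by_cases h : y = x <;> simp [VTerm.toN, NTerm.nsub, VTerm.vsub, h] <;> exact Relation.ReflTransGen.refl
  | lam y t ih =>
    have := dbstar_ctx (NGCtx.lam y NGCtx.hole) ih
    simpa [VTerm.toN, NTerm.nsub, VTerm.vsub, NGCtx.plug] using this
  | cut s y t ihs iht =>
    simp only [VTerm.toN, NTerm.nsub, VTerm.vsub]
    exact dbstar_es y ihs iht
  | sub z s y t ihs iht =>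
    by_cases h : z = x
    · cases hv with
      | var w =>
        simp only [VTerm.toN, NTerm.nsub, VTerm.vsub, h, if_pos rfl]
        exact dbstar_es y (dbstar_ctx (NGCtx.appR (NTerm.var w) NGCtx.hole) ihs) iht
      | lam w u =>
        simp only [VTerm.toN, NTerm.nsub, VTerm.vsub, h, if_pos rfl]
        have step : DB
            (NTerm.es (NTerm.app (NTerm.lam w u.toN) (NTerm.nsub (NTerm.lam w u.toN) x s.toN))
              y (NTerm.nsub (NTerm.lam w u.toN) x t.toN))
            (NTerm.es (NTerm.es (NTerm.nsub (NTerm.lam w u.toN) x s.toN) w u.toN)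
              y (NTerm.nsub (NTerm.lam w u.toN) x t.toN)) := by
          have r := DBRoot.mk NLCtx.hole w u.toN (NTerm.nsub (NTerm.lam w u.toN) x s.toN)
          have := DB.mk (NGCtx.esL NGCtx.hole y (NTerm.nsub (NTerm.lam w u.toN) x t.toN)) r
          simpa [NGCtx.plug, NLCtx.plug] using this
        refine (Relation.ReflTransGen.single step).trans ?_
        exact dbstar_es y (dbstar_es w ihs Relation.ReflTransGen.refl) iht
    · simp only [VTerm.toN, NTerm.nsub, VTerm.vsub, if_neg h]
      exact dbstar_es y (dbstar_ctx (NGCtx.appR (NTerm.var z) NGCtx.hole) ihs) iht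

end Sim

/-- the VSC simulates the vanilla λ-calculus: one cut step maps to
one vs step followed by zero or more dB steps. -/
theorem vsc_simulates_vanilla (t s : VTerm) (h : CutStep t s) :
    ∃ u : NTerm, Vs t.toN u ∧ Relation.ReflTransGen DB u s.toN := by
  obtain ⟨C, r⟩ := h
  obtain ⟨L, v, x, t₀, hv⟩ := r
  refine ⟨(Sim.GCtx.toNG C).plug (L.toN.plug (NTerm.nsub v.toN x t₀.toN)), ?_, ?_⟩
  · have root : VsRoot (NTerm.es (L.toN.plug v.toN) x t₀.toN)
        (L.toN.plug (NTerm.nsub v.toN x t₀.toN)) :=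
      VsRoot.mk L.toN v.toN x t₀.toN (Sim.toN_value hv)
    have := Sim.Vs.ctx (Sim.GCtx.toNG C) (Vs.mk NGCtx.hole root)
    simpa [Sim.toN_gplug, VTerm.toN, Sim.toN_lplug, NGCtx.plug] using this
  · have := Sim.dbstar_ctx (Sim.GCtx.toNG C)
      (Sim.dbstar_ctx (Sim.NLCtx.toG L.toN) (Sim.key v hv x t₀))
    simpa [Sim.toN_gplug, Sim.toN_lplug, Sim.toG_plug] using this
end

section
/- Neutral extension: if vanilla terms t and s are strongly normalizing for cut elimination, then λx.t and the subtraction [y s/z]t are strongly normalizing. -/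
lemma cutstep_lam_inv' {p u : VTerm} (h : CutStep p u) :
    ∀ x t, p = VTerm.lam x t → ∃ t', u = VTerm.lam x t' ∧ CutStep t t' := by
  rename CutStep _ _ => h0
  cases h0 with
  | @mk C a b hr => ?_
  intro x t heq
  cases C with
  | hole =>
    simp only [GCtx.plug] at heq
    subst heq; cases hr
  | lam x' C' =>
    simp only [GCtx.plug, VTerm.lam.injEq] at heq
    exact ⟨C'.plug b, by simp [GCtx.plug, heq.1], heq.2 ▸ CutStep.mk C' hr⟩
  | cutL C' y s => simp [GCtx.plug] at heq
  | cutR s y C' => simp [GCtx.plug] at heq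
  | subL w C' y s => simp [GCtx.plug] at heq
  | subR w s y C' => simp [GCtx.plug] at heq

lemma cutstep_sub_inv' {p u : VTerm} (h : CutStep p u) :
    ∀ y s z t, p = VTerm.sub y s z t →
      (∃ s', u = VTerm.sub y s' z t ∧ CutStep s s') ∨
      (∃ t', u = VTerm.sub y s z t' ∧ CutStep t t') := by
  rename CutStep _ _ => h0
  cases h0 with
  | @mk C a b hr => ?_
  intro y s z t heq
  cases C with
  | hole =>
    simp only [GCtx.plug] at heq
    subst heq; cases hr
  | lam x' C' => simp [GCtx.plug] at heq
  | cutL C' y' s' => simp [GCtx.plug] at heq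
  | cutR s' y' C' => simp [GCtx.plug] at heq
  | subL w C' x' s' =>
    simp only [GCtx.plug, VTerm.sub.injEq] at heq
    obtain ⟨h1, h2, h3, h4⟩ := heq
    exact Or.inl ⟨C'.plug b, by simp [GCtx.plug, h1, h3, h4], h2 ▸ CutStep.mk C' hr⟩
  | subR w s' x' C' =>
    simp only [GCtx.plug, VTerm.sub.injEq] at heq
    obtain ⟨h1, h2, h3, h4⟩ := heq
    exact Or.inr ⟨C'.plug b, by simp [GCtx.plug, h1, h2, h3], h4 ▸ CutStep.mk C' hr⟩

lemma sn_lam (x : ℕ) {t : VTerm} (ht : SN t) : SN (VTerm.lam x t) := by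
  induction ht with
  | intro t _ ih =>
    constructor
    intro u hu
    obtain ⟨t', rfl, hst⟩ := cutstep_lam_inv' hu x t rfl
    exact ih t' hst

lemma sn_sub (y z : ℕ) {s : VTerm} (hs : SN s) :
    ∀ t : VTerm, SN t → SN (VTerm.sub y s z t) := by
  induction hs with
  | intro s _ ihs =>
    intro t ht
    induction ht with
    | intro t ht iht =>
      constructor
      intro u hu
      rcases cutstep_sub_inv' hu y s z t rfl with ⟨s', rfl, hss⟩ | ⟨t', rfl, hst⟩
      · exact ihs s' hss t (Acc.intro t ht)
      · exact iht t' hst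

/-- neutral extension of SN to abstractions and subtractions. -/
theorem sn_neutral_extension (t s : VTerm) (ht : SN t) (hs : SN s)
    (x y z : ℕ) : SN (VTerm.lam x t) ∧ SN (VTerm.sub y s z t) :=
  ⟨sn_lam x ht, sn_sub y z hs t ht⟩
end
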